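/- Let k ≥ 2 and a be integers with k ∤ a, and let x ∈ ℂ. Then the following identity of formal power series in ℂ⟦z⟧ holds: (exp(z) − 1) · (e^{2πia/k}·exp(−z/k) − 1) · ∑_{n≥0} C_{n,k}(x;a) z^n/n! = z·exp(xz)·(exp(−z) − 1), where exp(wz) denotes the exponential power series ∑_n w^n z^n/n!. Equivalently, ∑_{n≥0} C_{n,k}(x;a) z^n/n! = (z·exp(xz)/(exp(z)−1)) · ((exp(−z)−1)/(e^{2πia/k}·exp(−z/k)−1)), the divisions being valid in ℂ⟦z⟧ after cancelling z and since e^{2πia/k} − 1 ≠ 0. -/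

import Mathlib

open scoped BigOperators

/-- The exponential power series `exp (w z) = ∑ wⁿ zⁿ / n!` in `ℂ⟦z⟧`. -/
noncomputable def expS (w : ℂ) : PowerSeries ℂ :=
  PowerSeries.mk fun n => w ^ n / n.factorial

/-- The Bernoulli polynomial `B_n` evaluated at a complex number (convention `B_1(x) = x - 1/2`). -/
noncomputable def Bpoly (n : ℕ) (x : ℂ) : ℂ :=
  Polynomial.aeval x (Polynomial.bernoulli n)

/-- `C_{n,k}(x;a) = ∑_{l=0}^{k−1} B_n(x − l/k) e^{2πial/k}`. -/
noncomputable def Cpoly (n k : ℕ) (a : ℤ) (x : ℂ) : ℂ :=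
  ∑ l ∈ Finset.range k,
    Bpoly n (x - (l : ℂ) / k) * Complex.exp (2 * (Real.pi : ℂ) * Complex.I * a * l / k)

lemma expS_eq (w : ℂ) : expS w = PowerSeries.rescale w (PowerSeries.exp ℂ) := by
  ext n
  simp [expS, PowerSeries.coeff_rescale, PowerSeries.coeff_exp, div_eq_mul_inv]

lemma expS_mul (u v : ℂ) : expS u * expS v = expS (u + v) := by
  rw [expS_eq, expS_eq, expS_eq, PowerSeries.exp_mul_exp_eq_exp_add]

lemma expS_zero : expS 0 = 1 := by
  rw [expS_eq, PowerSeries.rescale_zero]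
  simp

lemma bern_gen (t : ℂ) :
    (expS 1 - 1) * PowerSeries.mk (fun n => Bpoly n t / n.factorial)
      = PowerSeries.X * expS t := by
  have h := Polynomial.bernoulli_generating_function (A := ℂ) t
  have h1 : expS 1 = PowerSeries.exp ℂ := by
    rw [expS_eq, PowerSeries.rescale_one]; rfl
  have h2 : PowerSeries.mk (fun n => Bpoly n t / n.factorial)
      = PowerSeries.mk fun n => Polynomial.aeval t ((1 / n.factorial : ℚ) • Polynomial.bernoulli n) := by
    ext n
    simp [Bpoly, div_eq_mul_inv, mul_comm, smul_eq_mul, Rat.smul_def]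
  rw [h1, h2, expS_eq, mul_comm, h]

/-- Generating function of the `C_{n,k}(x;a)`:
`(exp(z) − 1)·(e^{2πia/k}·exp(−z/k) − 1)·∑_n C_{n,k}(x;a) zⁿ/n! = z·exp(xz)·(exp(−z) − 1)`
as formal power series in `ℂ⟦z⟧`. -/
theorem statement5 (k : ℕ) (hk : 2 ≤ k) (a : ℤ) (hka : ¬ (k : ℤ) ∣ a) (x : ℂ) :
    (expS 1 - 1) *
      (PowerSeries.C (Complex.exp (2 * (Real.pi : ℂ) * Complex.I * a / k)) *
          expS (-(1 / (k : ℂ))) - 1) *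
      PowerSeries.mk (fun n => Cpoly n k a x / n.factorial) =
    PowerSeries.X * expS x * (expS (-1) - 1) := by
  have hk0 : (k : ℂ) ≠ 0 := by
    exact_mod_cast Nat.cast_ne_zero.mpr (by omega)
  set ε : ℂ := Complex.exp (2 * (Real.pi : ℂ) * Complex.I * a / k) with hε
  have hεl : ∀ l : ℕ, Complex.exp (2 * (Real.pi : ℂ) * Complex.I * a * l / k) = ε ^ l := by
    intro l
    rw [hε, ← Complex.exp_nat_mul]
    congr 1
    ring
  have hεk : ε ^ k = 1 := by
    rw [← hεl]
    have : 2 * (Real.pi : ℂ) * Complex.I * a * k / k = a * (2 * Real.pi * Complex.I) := by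
      field_simp
    rw [this, Complex.exp_int_mul_two_pi_mul_I]
  -- decompose `mk (Cpoly ...)`
  have hmk : PowerSeries.mk (fun n => Cpoly n k a x / n.factorial)
      = ∑ l ∈ Finset.range k, PowerSeries.C (ε ^ l) *
          PowerSeries.mk (fun n => Bpoly n (x - (l : ℂ) / k) / n.factorial) := by
    ext n
    simp only [PowerSeries.coeff_mk, Cpoly, Finset.sum_div, map_sum,
      PowerSeries.coeff_C_mul, hεl]
    refine Finset.sum_congr rfl fun l _ => ?_
    ring
  rw [hmk, Finset.mul_sum]
  have hterm : ∀ l ∈ Finset.range k,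
      (expS 1 - 1) * (PowerSeries.C ε * expS (-(1 / (k : ℂ))) - 1) *
        (PowerSeries.C (ε ^ l) * PowerSeries.mk (fun n => Bpoly n (x - (l : ℂ) / k) / n.factorial))
      = PowerSeries.X * expS x *
          ((PowerSeries.C (ε ^ (l + 1)) * expS (-((l : ℂ) + 1) / k))
            - PowerSeries.C (ε ^ l) * expS (-(l : ℂ) / k)) := by
    intro l _
    have hB := bern_gen (x - (l : ℂ) / k)
    have hx : expS (x - (l : ℂ) / k) = expS x * expS (-(l : ℂ) / k) := by
      rw [expS_mul]; ring_nf
    calc (expS 1 - 1) * (PowerSeries.C ε * expS (-(1 / (k : ℂ))) - 1) *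
        (PowerSeries.C (ε ^ l) * PowerSeries.mk (fun n => Bpoly n (x - (l : ℂ) / k) / n.factorial))
        = (PowerSeries.C ε * expS (-(1 / (k : ℂ))) - 1) * (PowerSeries.C (ε ^ l) *
            ((expS 1 - 1) * PowerSeries.mk (fun n => Bpoly n (x - (l : ℂ) / k) / n.factorial))) := by
          ring
      _ = (PowerSeries.C ε * expS (-(1 / (k : ℂ))) - 1) * (PowerSeries.C (ε ^ l) *
            (PowerSeries.X * (expS x * expS (-(l : ℂ) / k)))) := by rw [hB, hx]
      _ = PowerSeries.X * expS x *
            (PowerSeries.C ε * PowerSeries.C (ε ^ l) * (expS (-(1 / (k : ℂ))) * expS (-(l : ℂ) / k))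
              - PowerSeries.C (ε ^ l) * expS (-(l : ℂ) / k)) := by ring
      _ = PowerSeries.X * expS x *
            ((PowerSeries.C (ε ^ (l + 1)) * expS (-((l : ℂ) + 1) / k))
              - PowerSeries.C (ε ^ l) * expS (-(l : ℂ) / k)) := by
          rw [expS_mul, ← map_mul, ← pow_succ']
          congr 3
          field_simp
          ring_nf
  rw [Finset.sum_congr rfl hterm, ← Finset.mul_sum]
  have htel : ∑ l ∈ Finset.range k,
      ((PowerSeries.C (ε ^ (l + 1)) * expS (-((l : ℂ) + 1) / k))
        - PowerSeries.C (ε ^ l) * expS (-(l : ℂ) / k))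
      = PowerSeries.C (ε ^ k) * expS (-(k : ℂ) / k) - PowerSeries.C (ε ^ 0) * expS (-(0 : ℂ) / k) := by
    have := Finset.sum_range_sub (f := fun l : ℕ => PowerSeries.C (ε ^ l) * expS (-(l : ℂ) / k)) k
    simpa using this
  rw [htel, hεk]
  have h1 : -(k : ℂ) / k = -1 := by field_simp
  have h2 : -(0 : ℂ) / k = 0 := by simp
  rw [h1, h2, expS_zero]
  simp
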